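/- arXiv:2310.13958 — 2 statements merged into one kernel-verified Lean document; each statement's English description precedes it below -/
import Mathlib

section
/- For n ≥ 1 and field elements s, a₁, ..., aₙ, let N be the n×n matrix with Nᵢᵢ = s - aᵢ and Nᵢⱼ = aᵢ for j ≠ i. Then det N = ∏ᵢ(s - 2aᵢ) + Σⱼ aⱼ · ∏_{i ≠ j}(s - 2aᵢ). -/
/-!
`N = diagonal (s - 2a) + a 𝟙ᵀ` is a diagonal matrix plus a rank-one matrix. The matrix
determinant lemma `det (A + u vᵀ) = det A + vᵀ (adj A) u` applies, and the adjugate of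
`diagonal d` is the diagonal matrix of the complementary products `∏_{i ≠ j} d i`.
-/

open Matrix Polynomial

namespace Matrix

variable {m R S : Type*} [Fintype m] [DecidableEq m] [CommRing R] [CommRing S]

theorem det_add_vecMulVec_of_isUnit {A : Matrix m m R} (hA : IsUnit A.det) (u v : m → R) :
    (A + vecMulVec u v).det = A.det + v ⬝ᵥ A.adjugate *ᵥ u := by
  have h : (1 + replicateRow Unit v * A⁻¹ * replicateCol Unit u).det = 1 + v ⬝ᵥ A⁻¹ *ᵥ u := by
    rw [Matrix.mul_assoc, ← replicateCol_mulVec, det_unique, add_apply, one_apply_eq,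
      replicateRow_mul_replicateCol_apply]
  rw [vecMulVec_eq Unit, det_add_replicateCol_mul_replicateRow hA, h, mul_add, mul_one,
    ← smul_eq_mul, ← dotProduct_smul, det_smul_inv_mulVec_eq_cramer _ _ hA,
    cramer_eq_adjugate_mulVec]

theorem _root_.RingHom.map_det_add_vecMulVec (f : R →+* S) (A : Matrix m m R) (u v : m → R) :
    f (A + vecMulVec u v).det = (f.mapMatrix A + vecMulVec (f ∘ u) (f ∘ v)).det := by
  rw [f.map_det]
  congr 1
  ext i j
  simp [vecMulVec_apply]

theorem _root_.RingHom.map_dotProduct_adjugate_mulVec (f : R →+* S) (A : Matrix m m R)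
    (u v : m → R) :
    f (v ⬝ᵥ A.adjugate *ᵥ u) = (f ∘ v) ⬝ᵥ (f.mapMatrix A).adjugate *ᵥ (f ∘ u) := by
  rw [f.map_dotProduct, ← f.map_adjugate]
  congr 1
  ext i
  exact f.map_mulVec _ _ i

/-- The identity holds for the generic matrix `X • 1 + A` over `R[X]`: its determinant is monic,
so `R[X]` embeds into the localization where that determinant becomes a unit. Then specialize
at `X = 0`. -/
theorem det_add_vecMulVec (A : Matrix m m R) (u v : m → R) :
    (A + vecMulVec u v).det = A.det + v ⬝ᵥ A.adjugate *ᵥ u := by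
  let B := charmatrix (-A)
  let φ : R[X] →+* Localization.Away (-A).charpoly := algebraMap _ _
  have hφ : Function.Injective φ := IsLocalization.injective _
    (Submonoid.powers_le.2 (charpoly_monic (-A)).mem_nonZeroDivisors)
  have hB : IsUnit (φ.mapMatrix B).det := by
    rw [← φ.map_det]
    exact IsLocalization.Away.algebraMap_isUnit (-A).charpoly
  have generic : (B + vecMulVec (C ∘ u) (C ∘ v)).det =
      B.det + (C ∘ v) ⬝ᵥ B.adjugate *ᵥ (C ∘ u) := hφ <| by
    rw [φ.map_det_add_vecMulVec, map_add, φ.map_det, φ.map_dotProduct_adjugate_mulVec]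
    exact det_add_vecMulVec_of_isUnit hB _ _
  have hB0 : (evalRingHom 0).mapMatrix B = A := by
    ext i j
    by_cases h : i = j <;> simp [B, h]
  have hC (w : m → R) : evalRingHom 0 ∘ C ∘ w = w := by ext; simp
  have := congrArg (evalRingHom 0) generic
  rwa [RingHom.map_det_add_vecMulVec, map_add, RingHom.map_det,
    RingHom.map_dotProduct_adjugate_mulVec, hB0, hC, hC] at this

theorem det_diagonal_add_vecMulVec (d u v : m → R) :
    (diagonal d + vecMulVec u v).det =
      ∏ i, d i + ∑ j, v j * u j * ∏ i ∈ Finset.univ.erase j, d i := by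
  rw [det_add_vecMulVec, det_diagonal, adjugate_diagonal]
  simp only [dotProduct, mulVec_diagonal, mul_assoc, mul_comm (u _)]

end Matrix

theorem corbin_determinant_denominator_general {K : Type*} [Field K] (n : ℕ)
    (s : K) (a : Fin n → K)
    (N : Matrix (Fin n) (Fin n) K)
    (hN : ∀ i j, N i j = if i = j then s - a i else a i) :
    N.det = ∏ i, (s - 2 * a i) +
      ∑ j, a j * ∏ i ∈ Finset.univ.erase j, (s - 2 * a i) := by
  have hN' : N = diagonal (fun i => s - 2 * a i) + vecMulVec a 1 := by
    ext i j
    rw [hN]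
    by_cases h : i = j
    · simp [h]
      ring
    · simp [h]
  simp only [hN', det_diagonal_add_vecMulVec, Pi.one_apply, one_mul]

theorem corbin_determinant_denominator {K : Type*} [Field K] (n : ℕ) (hn : 1 ≤ n)
    (s : K) (a : Fin n → K)
    (N : Matrix (Fin n) (Fin n) K)
    (hN : ∀ i j, N i j = if i = j then s - a i else a i) :
    N.det = ∏ i, (s - 2 * a i) +
      ∑ j, a j * ∏ i ∈ Finset.univ.erase j, (s - 2 * a i) :=
  corbin_determinant_denominator_general n s a N hN
end

section
/- For elements a, b, c, c', d, d' of a commutative ring, the determinant of the 4×4 matrix with rows (1, a, a, a²), (1, b, b, b²), (1, c, c', cc'), (1, d, d', dd') equals (a - b) times the determinant of the 3×3 matrix with rows (1, ab, a + b), (1, cd', c + d'), (1, c'd, c' + d). -/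
theorem corbin_muir_determinant {R : Type*} [CommRing R] (a b c c' d d' : R) :
    (Matrix.det !![1, a, a, a ^ 2; 1, b, b, b ^ 2; 1, c, c', c * c'; 1, d, d', d * d']) =
      (a - b) * Matrix.det !![1, a * b, a + b; 1, c * d', c + d'; 1, c' * d, c' + d] := by
  rw [Matrix.det_succ_row_zero, Matrix.det_fin_three]
  simp [Fin.sum_univ_succ, Matrix.det_fin_three, Fin.succAbove]
  ring
end
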